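/- Let $H$ be a $(2,d)$-hypergraph containing a strong $(3k+1, (3k+1)d+1)$-subedge hypergrid. Then $ghw(H) > k$. -/

import Mathlib

open Finset

open scoped Classical

variable {α : Type*}

structure FinHypergraph (α : Type*) where
  verts : Finset α
  edges : Finset (Finset α)
  edge_sub : ∀ e ∈ edges, e ⊆ verts

namespace FinHypergraph

/-- `U` is a subedge of `H`: it is contained in some hyperedge. -/
def IsSubedge (H : FinHypergraph α) (U : Finset α) : Prop := ∃ e ∈ H.edges, U ⊆ e

/-- `H` is a `(2,d)`-hypergraph: any two distinct edges intersect in at most `d` vertices. -/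
def Is2dHypergraph (H : FinHypergraph α) (d : ℕ) : Prop :=
  ∀ e ∈ H.edges, ∀ f ∈ H.edges, e ≠ f → (e ∩ f).card ≤ d

/-- The induced subhypergraph `H[U]`. -/
noncomputable def induce (H : FinHypergraph α) (U : Finset α) : FinHypergraph α where
  verts := U
  edges := (H.edges.image (· ∩ U)).filter (· ≠ ∅)
  edge_sub := by
    intro e he
    simp only [Finset.mem_filter, Finset.mem_image] at he
    obtain ⟨⟨f, hf, rfl⟩, -⟩ := he
    exact Finset.inter_subset_right

/-- The adjacency graph of a hypergraph: two distinct vertices are adjacent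
iff they lie in a common edge. -/
def adjGraph (H : FinHypergraph α) : SimpleGraph α where
  Adj v w := v ≠ w ∧ ∃ e ∈ H.edges, v ∈ e ∧ w ∈ e
  symm := by constructor; rintro v w ⟨hne, e, he, hv, hw⟩; exact ⟨hne.symm, e, he, hw, hv⟩
  loopless := by constructor; rintro v ⟨hne, -⟩; exact hne rfl

/-- Adjacency in `H` avoiding the vertex set `S` (i.e. adjacency in `H[V(H) \ S]`). -/
def avoidGraph (H : FinHypergraph α) (S : Finset α) : SimpleGraph α where
  Adj v w := v ≠ w ∧ v ∉ S ∧ w ∉ S ∧ ∃ e ∈ H.edges, v ∈ e ∧ w ∈ e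
  symm := by constructor; rintro v w ⟨hne, hv, hw, e, he, h1, h2⟩; exact ⟨hne.symm, hw, hv, e, he, h2, h1⟩
  loopless := by constructor; rintro v ⟨hne, -⟩; exact hne rfl

/-- `S` is an `(A,B)`-separator of `H`: no path of `H[V(H) \ S]` joins
a vertex of `A \ S` to a vertex of `B \ S`. -/
def IsSeparator (H : FinHypergraph α) (A B S : Finset α) : Prop :=
  ∀ a ∈ A, a ∉ S → ∀ b ∈ B, b ∉ S → ¬ (H.avoidGraph S).Reachable a b

/-- `U` has an edge cover of weight at most `k` (edge cover number `ρ(U) ≤ k`). -/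
def CoverLE (H : FinHypergraph α) (U : Finset α) (k : ℕ) : Prop :=
  ∃ F : Finset (Finset α), F ⊆ H.edges ∧ U ⊆ F.biUnion id ∧ F.card ≤ k

/-- `(T, B)` is a tree decomposition of `H`. -/
def IsTreeDecomp (H : FinHypergraph α) {ι : Type*} (T : SimpleGraph ι) (B : ι → Finset α) : Prop :=
  T.IsTree ∧ (∀ u, B u ⊆ H.verts) ∧ (∀ e ∈ H.edges, ∃ u, e ⊆ B u) ∧
  (∀ v ∈ H.verts, (T.induce {u | v ∈ B u}).Connected)

/-- Generalised hypertree width of `H` is at most `k`. -/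
def ghwLE (H : FinHypergraph α) (k : ℕ) : Prop :=
  ∃ (ι : Type) (T : SimpleGraph ι) (B : ι → Finset α),
    H.IsTreeDecomp T B ∧ ∀ u, H.CoverLE (B u) k

/-- Two subedges are incompatible if their union is not a subedge. -/
def Incompatible (H : FinHypergraph α) (X Y : Finset α) : Prop := ¬ H.IsSubedge (X ∪ Y)

/-- `U₁,…,U_a, S₁,…,S_b` form an `(a,b)` subedge hypergrid (shyg). -/
def IsShyg (H : FinHypergraph α) {a b : ℕ} (U : Fin a → Finset α) (S : Fin b → Finset α) : Prop :=
  (∀ i, H.IsSubedge (U i)) ∧ (∀ j, H.IsSubedge (S j)) ∧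
  (∀ i i', i ≠ i' → H.Incompatible (U i) (U i')) ∧
  (∀ j j', j ≠ j' → H.Incompatible (S j) (S j')) ∧
  (∀ i j, H.Incompatible (U i) (S j)) ∧
  (∀ i i', i ≠ i' → Disjoint (U i) (U i')) ∧
  (∀ j i, (S j ∩ U i).Nonempty)

/-- A strong shyg: additionally the `S j` intersect pairwise disjointly inside `⋃ U i`. -/
def IsStrongShyg (H : FinHypergraph α) {a b : ℕ}
    (U : Fin a → Finset α) (S : Fin b → Finset α) : Prop :=
  H.IsShyg U S ∧ ∀ j j', j ≠ j' → S j ∩ S j' ∩ Finset.univ.biUnion U = ∅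

/-- `H` has a strong `(a,b)`-shyg. -/
def HasStrongShyg (H : FinHypergraph α) (a b : ℕ) : Prop :=
  ∃ (U : Fin a → Finset α) (S : Fin b → Finset α), H.IsStrongShyg U S

/-- `ext(C, E')`: the edges of `E'` meeting `C`. -/
noncomputable def ext (E' : Finset (Finset α)) (C : Finset α) : Finset (Finset α) :=
  E'.filter fun e => (e ∩ C).Nonempty

/-- `C` is (the vertex set of) a connected component of `H`. -/
def IsConnComp (H : FinHypergraph α) (C : Finset α) : Prop :=
  ∃ v ∈ H.verts, ∀ w, w ∈ C ↔ w ∈ H.verts ∧ H.adjGraph.Reachable v w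

end FinHypergraph

/-- The vertex set of `T_{x,Y}`: the union of all paths of `G` starting at `x`
whose second vertex belongs to `Y`. -/
def subtreeVerts {V : Type*} (G : SimpleGraph V) (x : V) (Y : Set V) : Set V :=
  {v | v = x ∨ ∃ w : G.Walk x v, w.IsPath ∧ w.getVert 1 ∈ Y ∧ ¬ w.Nil}

/-- The tree `T⁺_{t,Y}`: the restriction of `T` to `s` together with a fresh node `none`
made adjacent to `t`. -/
def plusGraph {ι : Type*} (T : SimpleGraph ι) (s : Set ι) (t : ι) :
    SimpleGraph (Option s) where
  Adj a b :=
    (∃ u v : s, a = some u ∧ b = some v ∧ T.Adj u v) ∨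
    (a = none ∧ ∃ v : s, b = some v ∧ (v : ι) = t) ∨
    (b = none ∧ ∃ u : s, a = some u ∧ (u : ι) = t)
  symm := by
    constructor
    rintro a b (⟨u, v, rfl, rfl, h⟩ | ⟨rfl, v, rfl, hv⟩ | ⟨rfl, u, rfl, hu⟩)
    · exact Or.inl ⟨v, u, rfl, rfl, h.symm⟩
    · exact Or.inr (Or.inr ⟨rfl, v, rfl, hv⟩)
    · exact Or.inr (Or.inl ⟨rfl, u, rfl, hu⟩)
  loopless := by
    constructor
    rintro a (⟨u, v, rfl, h1, h2⟩ | ⟨rfl, v, h, -⟩ | ⟨rfl, u, h, -⟩)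
    · obtain rfl : u = v := Option.some_injective _ h1
      exact T.loopless.irrefl _ h2
    · exact nomatch h
    · exact nomatch h

/-- `ξ'(n,k,d)` from the paper. -/
def xi' (k d : ℕ) : ℕ → ℕ
  | 0 => (3*k+1)*d+1
  | n+1 => ((3*k+1)*d)^2 * xi' k d n + 1
section TreeAux

open SimpleGraph

variable {ι : Type*} (T : SimpleGraph ι)

/-- The graph `T` with the vertex `t` isolated. -/
def gdel (t : ι) : SimpleGraph ι where
  Adj x y := T.Adj x y ∧ x ≠ t ∧ y ≠ t
  symm := by constructor; rintro x y ⟨h, hx, hy⟩; exact ⟨h.symm, hy, hx⟩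
  loopless := by constructor; intro x h; exact T.loopless.irrefl x h.1

variable {T}

lemma gdel_walk_support {t y : ι} : ∀ {x : ι} (w : (gdel T t).Walk x y),
    x ≠ t → t ∉ w.support := by
  intro x w
  induction w with
  | nil =>
    intro hx hmem
    rw [Walk.support_nil, List.mem_singleton] at hmem
    exact hx hmem.symm
  | cons h p ih =>
    intro hx hmem
    rw [Walk.support_cons, List.mem_cons] at hmem
    rcases hmem with h1 | h2
    · exact hx h1.symm
    · exact ih h.2.2 h2

lemma gdel_reachable_ne {t x y : ι} (h : (gdel T t).Reachable x y) (hx : x ≠ t) : y ≠ t := by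
  obtain ⟨w⟩ := h
  intro hy
  exact gdel_walk_support w hx (hy ▸ w.end_mem_support)

lemma gdel_walk_exists {t y : ι} : ∀ {x : ι} (w : (gdel T t).Walk x y),
    ∃ q : T.Walk x y, q.support = w.support := by
  intro x w
  induction w with
  | nil => exact ⟨Walk.nil, rfl⟩
  | cons h p ih =>
    obtain ⟨q, hq⟩ := ih
    exact ⟨Walk.cons h.1 q, by rw [Walk.support_cons, Walk.support_cons, hq]⟩

lemma reachable_gdel_of_walk {t y : ι} : ∀ {x : ι} (w : T.Walk x y),
    t ∉ w.support → (gdel T t).Reachable x y := by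
  intro x w
  induction w with
  | nil => exact fun _ => Reachable.refl _
  | @cons x v y h p ih =>
    intro hts
    rw [Walk.support_cons, List.mem_cons, not_or] at hts
    have hx : x ≠ t := fun e => hts.1 e.symm
    have hv : v ≠ t := fun e => hts.2 (e ▸ p.start_mem_support)
    exact (SimpleGraph.Adj.reachable (⟨h, hx, hv⟩ : (gdel T t).Adj x v)).trans (ih hts.2)

lemma unique_nbr (hA : T.IsAcyclic) {t s s' : ι} (hs : T.Adj t s) (hs' : T.Adj t s')
    (hr : (gdel T t).Reachable s s') : s = s' := by
  by_contra hne
  obtain ⟨w0⟩ := hr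
  obtain ⟨q, hq⟩ := gdel_walk_exists w0.bypass
  have hqpath : q.IsPath := by
    rw [Walk.isPath_def, hq]
    exact (Walk.isPath_def _).mp w0.bypass_isPath
  have hts : t ∉ q.support := by
    rw [hq]; exact gdel_walk_support w0.bypass hs.ne'
  have hp1 : (Walk.cons hs q).IsPath := (Walk.cons_isPath_iff _ _).2 ⟨hqpath, hts⟩
  have hp2 : (Walk.cons hs' (Walk.nil : T.Walk s' s')).IsPath := by
    rw [Walk.cons_isPath_iff]
    refine ⟨Walk.IsPath.nil, ?_⟩
    rw [Walk.support_nil, List.mem_singleton]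
    exact hs'.ne
  have heq := hA.path_unique ⟨_, hp1⟩ ⟨_, hp2⟩
  have hlen := congrArg (fun p : T.Path t s' => p.1.length) heq
  simp only [Walk.length_cons, Walk.length_nil] at hlen
  exact hne (Walk.eq_of_length_eq_zero (p := q) (by omega))

lemma exists_step (hc : T.Connected) {t x : ι} (hx : x ≠ t) :
    ∃ s, T.Adj t s ∧ (gdel T t).Reachable s x ∧ T.dist t x = T.dist s x + 1 := by
  obtain ⟨p, hp, hl⟩ := hc.exists_path_of_dist t x
  cases p with
  | nil => exact absurd rfl hx.symm
  | @cons _ v _ h q =>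
    rw [Walk.cons_isPath_iff] at hp
    have hr : (gdel T t).Reachable v x := reachable_gdel_of_walk q hp.2
    refine ⟨v, h, hr, ?_⟩
    have h1 : T.dist v x ≤ q.length := SimpleGraph.dist_le q
    have h2 : T.dist t x ≤ 1 + T.dist v x := by
      have htri := hc.dist_triangle (u := t) (v := v) (w := x)
      have hd : T.dist t v ≤ 1 := by
        have := SimpleGraph.dist_le (Walk.cons h (Walk.nil : T.Walk v v))
        simpa using this
      omega
    have h3 : q.length + 1 = T.dist t x := by
      simpa [Walk.length_cons] using hl
    omega

lemma centroid (hT : T.IsTree) {m : ℕ} (n : Fin m → ι) :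
    ∃ t : ι, ∀ i0 : Fin m, n i0 ≠ t →
      2 * (Finset.univ.filter fun i => (gdel T t).Reachable (n i0) (n i)).card ≤ m := by
  have hc := hT.isConnected
  have : Nonempty ι := hc.nonempty
  set φ : ι → ℕ := fun t => ∑ i, T.dist t (n i) with hφ
  obtain ⟨t, ht⟩ : ∃ t, φ t = sInf (Set.range φ) := Nat.sInf_mem (Set.range_nonempty φ)
  have hmin : ∀ s, φ t ≤ φ s := fun s => ht ▸ Nat.sInf_le ⟨s, rfl⟩
  refine ⟨t, fun i0 h0 => ?_⟩
  by_contra hbig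
  push_neg at hbig
  obtain ⟨t', hadj', hreach', _⟩ := exists_step hc h0
  set C := Finset.univ.filter (fun i => (gdel T t).Reachable (n i0) (n i)) with hC
  set R := Finset.univ.filter (fun i => ¬ (gdel T t).Reachable (n i0) (n i)) with hR
  have key : ∀ i ∈ C, T.dist t (n i) = T.dist t' (n i) + 1 := by
    intro i hi
    rw [hC, Finset.mem_filter] at hi
    have hri : (gdel T t).Reachable (n i0) (n i) := hi.2
    have hni : n i ≠ t := gdel_reachable_ne hri h0
    obtain ⟨s, hadj, hreach, hdist⟩ := exists_step hc hni
    have hst : s = t' :=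
      unique_nbr hT.IsAcyclic hadj hadj' ((hreach.trans hri.symm).trans hreach'.symm)
    rw [hst] at hdist
    exact hdist
  have tri : ∀ i, T.dist t' (n i) ≤ T.dist t (n i) + 1 := by
    intro i
    have h1 := hc.dist_triangle (u := t') (v := t) (w := n i)
    have h2 : T.dist t' t ≤ 1 := by
      have := SimpleGraph.dist_le (Walk.cons hadj'.symm (Walk.nil : T.Walk t t))
      simpa using this
    omega
  have hsum : ∀ g : Fin m → ℕ, ∑ i ∈ C, g i + ∑ i ∈ R, g i = ∑ i, g i := fun g =>
    Finset.sum_filter_add_sum_filter_not _ _ g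
  have e1 : ∑ i ∈ C, T.dist t (n i) = ∑ i ∈ C, T.dist t' (n i) + C.card := by
    rw [Finset.sum_congr rfl key, Finset.sum_add_distrib, Finset.sum_const, smul_eq_mul, mul_one]
  have e2 : ∑ i ∈ R, T.dist t' (n i) ≤ ∑ i ∈ R, T.dist t (n i) + R.card := by
    calc ∑ i ∈ R, T.dist t' (n i) ≤ ∑ i ∈ R, (T.dist t (n i) + 1) :=
          Finset.sum_le_sum (fun i _ => tri i)
      _ = _ := by rw [Finset.sum_add_distrib, Finset.sum_const, smul_eq_mul, mul_one]
  have hmt := hmin t'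
  have hft : φ t = ∑ i ∈ C, T.dist t (n i) + ∑ i ∈ R, T.dist t (n i) := (hsum _).symm
  have hft' : φ t' = ∑ i ∈ C, T.dist t' (n i) + ∑ i ∈ R, T.dist t' (n i) := (hsum _).symm
  have hcard : C.card + R.card = m := by
    have h := Finset.card_filter_add_card_filter_not
      (s := (Finset.univ : Finset (Fin m)))
      (p := fun i => (gdel T t).Reachable (n i0) (n i))
    rw [hC, hR]
    simpa using h
  omega

lemma induce_reach {s : Set ι} (hs : (T.induce s).Connected) {t : ι} (hts : t ∉ s)
    {p q : ι} (hp : p ∈ s) (hq : q ∈ s) : (gdel T t).Reachable p q := by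
  have hr := hs.preconnected ⟨p, hp⟩ ⟨q, hq⟩
  let φ : T.induce s →g gdel T t :=
    ⟨Subtype.val, fun {a b} hab => ⟨hab, fun e => hts (e ▸ a.2), fun e => hts (e ▸ b.2)⟩⟩
  exact hr.map φ

lemma grouping {k : ℕ} (J : Finset (Fin (3*k+1))) (r : Fin (3*k+1) → Fin (3*k+1) → Prop)
    (hrefl : ∀ i, r i i) (hsym : ∀ i i', r i i' → r i' i)
    (htrans : ∀ i i' i'', r i i' → r i' i'' → r i i'')
    (hsize : ∀ i ∈ J, 2 * (J.filter (r i)).card ≤ 3*k+1) :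
    ∃ I1 ⊆ J, (∀ i ∈ I1, ∀ i' ∈ J, r i i' → i' ∈ I1) ∧ I1.card ≤ 2*k ∧ (J \ I1).card ≤ 2*k := by
  classical
  set S := J.powerset.filter
    (fun I => (∀ i ∈ I, ∀ i' ∈ J, r i i' → i' ∈ I) ∧ J.card ≤ I.card + 2*k) with hS
  have hJS : J ∈ S := by
    rw [hS, Finset.mem_filter, Finset.mem_powerset]
    exact ⟨Finset.Subset.refl J, fun i _ i' hi' _ => hi', Nat.le_add_right _ _⟩
  obtain ⟨I1, hI1S, hI1min⟩ := Finset.exists_min_image S Finset.card ⟨J, hJS⟩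
  rw [hS, Finset.mem_filter, Finset.mem_powerset] at hI1S
  obtain ⟨hsub, hclosed, hcount⟩ := hI1S
  have hsd0 : (J \ I1).card = J.card - I1.card := Finset.card_sdiff_of_subset hsub
  refine ⟨I1, hsub, hclosed, ?_, by omega⟩
  by_cases hJ : J.card ≤ 2*k
  · have hES : (∅ : Finset (Fin (3*k+1))) ∈ S := by
      rw [hS, Finset.mem_filter, Finset.mem_powerset]
      exact ⟨Finset.empty_subset J, fun i hi => absurd hi (Finset.notMem_empty i),
        by simpa using hJ⟩
    have h0 := hI1min ∅ hES
    simp only [Finset.card_empty, Nat.le_zero] at h0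
    omega
  · push_neg at hJ
    have hne : I1.Nonempty := by
      rw [← Finset.card_pos]; omega
    obtain ⟨i0, hi0, hminsize⟩ := Finset.exists_min_image I1 (fun i => (J.filter (r i)).card) hne
    set D := J.filter (r i0) with hD
    have hDI : D ⊆ I1 := by
      intro x hx
      rw [hD, Finset.mem_filter] at hx
      exact hclosed i0 hi0 x hx.1 hx.2
    have hi0D : i0 ∈ D := by rw [hD, Finset.mem_filter]; exact ⟨hsub hi0, hrefl i0⟩
    have hDpos : 1 ≤ D.card := Finset.card_pos.mpr ⟨i0, hi0D⟩
    have hDle : D.card ≤ I1.card := Finset.card_le_card hDI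
    have hsd : (I1 \ D).card = I1.card - D.card := Finset.card_sdiff_of_subset hDI
    have hclosed' : ∀ i ∈ I1 \ D, ∀ i' ∈ J, r i i' → i' ∈ I1 \ D := by
      intro i hi i' hi' hr'
      rw [Finset.mem_sdiff] at hi ⊢
      refine ⟨hclosed i hi.1 i' hi' hr', fun hD' => hi.2 ?_⟩
      rw [hD, Finset.mem_filter] at hD' ⊢
      exact ⟨hsub hi.1, htrans i0 i' i hD'.2 (hsym i i' hr')⟩
    have hfail : ¬ (J.card ≤ (I1 \ D).card + 2*k) := by
      intro hle
      have hmem : I1 \ D ∈ S := by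
        rw [hS, Finset.mem_filter, Finset.mem_powerset]
        exact ⟨(Finset.sdiff_subset).trans hsub, hclosed', hle⟩
      have := hI1min _ hmem
      omega
    push_neg at hfail
    have hJle : J.card ≤ 3*k+1 := by
      have := Finset.card_le_univ J
      simpa using this
    have h2D : 2 * D.card ≤ 3*k+1 := hsize i0 (hsub hi0)
    by_cases hone : I1 ⊆ D
    · have : I1.card ≤ D.card := Finset.card_le_card hone
      omega
    · rw [Finset.not_subset] at hone
      obtain ⟨i1, hi1, hi1D⟩ := hone
      have hD1 : J.filter (r i1) ⊆ I1 := by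
        intro x hx
        rw [Finset.mem_filter] at hx
        exact hclosed i1 hi1 x hx.1 hx.2
      have hdisj : Disjoint D (J.filter (r i1)) := by
        rw [Finset.disjoint_left]
        intro x hxD hx1
        rw [hD, Finset.mem_filter] at hxD
        rw [Finset.mem_filter] at hx1
        exact hi1D (by
          rw [hD, Finset.mem_filter]
          exact ⟨hsub hi1, htrans i0 x i1 hxD.2 (hsym i1 x hx1.2)⟩)
      have hmin1 := hminsize i1 hi1
      have hunion : D.card + (J.filter (r i1)).card ≤ I1.card := by
        rw [← Finset.card_union_of_disjoint hdisj]
        exact Finset.card_le_card (Finset.union_subset hDI hD1)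
      omega

end TreeAux
theorem ghw_gt_of_strong_shyg {α : Type*} (H : FinHypergraph α) (d k : ℕ)
    (h2d : H.Is2dHypergraph d)
    (hgrid : H.HasStrongShyg (3 * k + 1) ((3 * k + 1) * d + 1)) :
    ¬ H.ghwLE k := by
  rintro ⟨ι, T, B, ⟨hTree, hBsub, hedge, hconn⟩, hcov⟩
  obtain ⟨U, S, ⟨hUsub, hSsub, hUU, hSS, hUS, hUdisj, hSU⟩, hstrong⟩ := hgrid
  choose e he hUe using hUsub
  choose f hf hSf using hSsub
  have hSU' : ∀ j i, ∃ x, x ∈ S j ∩ U i := hSU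
  choose u hu using hSU'
  choose n hn using fun i => hedge (e i) (he i)
  have huS : ∀ j i, u j i ∈ S j := fun j i => (Finset.mem_inter.mp (hu j i)).1
  have huU : ∀ j i, u j i ∈ U i := fun j i => (Finset.mem_inter.mp (hu j i)).2
  -- points of a fixed row are pairwise distinct
  have hudiff : ∀ i j j', j ≠ j' → u j i ≠ u j' i := by
    intro i j j' hjj heq
    have hx : u j i ∈ S j ∩ S j' ∩ Finset.univ.biUnion U := by
      rw [Finset.mem_inter, Finset.mem_inter]
      refine ⟨⟨huS j i, ?_⟩, Finset.mem_biUnion.mpr ⟨i, Finset.mem_univ i, huU j i⟩⟩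
      rw [heq]; exact huS j' i
    rw [hstrong j j' hjj] at hx
    exact Finset.notMem_empty _ hx
  -- the edges e i are pairwise distinct
  have heinj : ∀ i i', i ≠ i' → e i ≠ e i' := by
    intro i i' hne heq
    refine hUU i i' hne ⟨e i, he i, Finset.union_subset (hUe i) ?_⟩
    rw [heq]; exact hUe i'
  obtain ⟨t, hcent⟩ := centroid hTree n
  set J := Finset.univ.filter (fun i => n i ≠ t) with hJdef
  have hsize : ∀ i ∈ J,
      2 * (J.filter (fun i' => (gdel T t).Reachable (n i) (n i'))).card ≤ 3*k+1 := by
    intro i hi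
    rw [hJdef, Finset.mem_filter] at hi
    have h1 := hcent i hi.2
    have h2 : J.filter (fun i' => (gdel T t).Reachable (n i) (n i')) ⊆
        Finset.univ.filter (fun i' => (gdel T t).Reachable (n i) (n i')) :=
      Finset.filter_subset_filter _ (Finset.subset_univ J)
    exact le_trans (Nat.mul_le_mul_left 2 (Finset.card_le_card h2)) h1
  obtain ⟨I1, hI1J, hclosed, hI1card, hI2card⟩ :=
    grouping J (fun i i' => (gdel T t).Reachable (n i) (n i'))
      (fun i => SimpleGraph.Reachable.refl _) (fun i i' h => h.symm)
      (fun i i' i'' h h' => h.trans h') hsize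
  set I2 := J \ I1 with hI2def
  have hcu : (Finset.univ : Finset (Fin (3*k+1))).card = 3*k+1 := by simp
  have hrows1card : k + 1 ≤ (Finset.univ \ I2).card := by
    have h1 : (Finset.univ \ I2).card = (Finset.univ : Finset (Fin (3*k+1))).card - I2.card :=
      Finset.card_sdiff_of_subset (Finset.subset_univ I2)
    omega
  have hrows2card : k + 1 ≤ (Finset.univ \ I1).card := by
    have h1 : (Finset.univ \ I1).card = (Finset.univ : Finset (Fin (3*k+1))).card - I1.card :=
      Finset.card_sdiff_of_subset (Finset.subset_univ I1)
    omega
  -- vertices with n i = t are inside the bag B t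
  have hBt : ∀ (j : Fin ((3*k+1)*d+1)) i, n i = t → u j i ∈ B t := by
    intro j i hit
    have := hn i (hUe i (huU j i))
    rw [hit] at this
    exact this
  -- Column dichotomy
  have hcol : ∀ j : Fin ((3*k+1)*d+1),
      (∀ i ∈ Finset.univ \ I2, u j i ∈ B t) ∨ (∀ i ∈ Finset.univ \ I1, u j i ∈ B t) := by
    intro j
    by_contra hcon
    push_neg at hcon
    obtain ⟨⟨i1, hi1mem, hi1B⟩, ⟨i2, hi2mem, hi2B⟩⟩ := hcon
    have hi1J : i1 ∈ J := by
      rw [hJdef, Finset.mem_filter]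
      exact ⟨Finset.mem_univ _, fun hit => hi1B (hBt j i1 hit)⟩
    have hi2J : i2 ∈ J := by
      rw [hJdef, Finset.mem_filter]
      exact ⟨Finset.mem_univ _, fun hit => hi2B (hBt j i2 hit)⟩
    have hi1I1 : i1 ∈ I1 := by
      rw [Finset.mem_sdiff] at hi1mem
      by_contra hno
      exact hi1mem.2 (by rw [hI2def, Finset.mem_sdiff]; exact ⟨hi1J, hno⟩)
    have hi2I1 : i2 ∉ I1 := (Finset.mem_sdiff.mp hi2mem).2
    obtain ⟨w, hw⟩ := hedge (f j) (hf j)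
    have hx1 : u j i1 ∈ H.verts := H.edge_sub (e i1) (he i1) (hUe i1 (huU j i1))
    have hx2 : u j i2 ∈ H.verts := H.edge_sub (e i2) (he i2) (hUe i2 (huU j i2))
    have hr1 : (gdel T t).Reachable (n i1) w := by
      have hcx := hconn _ hx1
      exact induce_reach hcx hi1B (hn i1 (hUe i1 (huU j i1))) (hw (hSf j (huS j i1)))
    have hr2 : (gdel T t).Reachable w (n i2) := by
      have hcx := hconn _ hx2
      exact (induce_reach hcx hi2B (hn i2 (hUe i2 (huU j i2))) (hw (hSf j (huS j i2)))).symm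
    exact hi2I1 (hclosed i1 hi1I1 i2 hi2J (hr1.trans hr2))
  -- The final counting argument
  have final : ∀ (Rows : Finset (Fin (3*k+1))) (Jc : Finset (Fin ((3*k+1)*d+1))),
      k + 1 ≤ Rows.card → (3*k+1)*d+1 ≤ 2 * Jc.card →
      (∀ i ∈ Rows, ∀ j ∈ Jc, u j i ∈ B t) → False := by
    intro Rows Jc hR hJc hmem
    obtain ⟨F, hFE, hFcov, hFcard⟩ := hcov t
    have hstep : ∀ i ∈ Rows, e i ∈ F := by
      intro i hi
      by_contra hei
      have hinj : Set.InjOn (fun j => u j i) Jc := by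
        intro j hj j' hj' heq
        by_contra hne
        exact hudiff i j j' hne heq
      have hPcard : (Jc.image (fun j => u j i)).card = Jc.card :=
        Finset.card_image_of_injOn hinj
      have hPsub : ∀ g ∈ F, ((Jc.image (fun j => u j i)) ∩ g).card ≤ d := by
        intro g hg
        have h1 : (Jc.image (fun j => u j i)) ∩ g ⊆ e i ∩ g := by
          intro x hx
          rw [Finset.mem_inter] at hx ⊢
          obtain ⟨j, _, rfl⟩ := Finset.mem_image.mp hx.1
          exact ⟨hUe i (huU j i), hx.2⟩
        have h2 := h2d (e i) (he i) g (hFE hg) (fun heq => hei (by rw [heq]; exact hg))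
        exact le_trans (Finset.card_le_card h1) h2
      have hcover : (Jc.image (fun j => u j i)) ⊆
          F.biUnion (fun g => (Jc.image (fun j => u j i)) ∩ g) := by
        intro x hx
        have hxB : x ∈ B t := by
          obtain ⟨j, hj, rfl⟩ := Finset.mem_image.mp hx
          exact hmem i hi j hj
        have hxF := hFcov hxB
        rw [Finset.mem_biUnion] at hxF ⊢
        obtain ⟨g, hg, hxg⟩ := hxF
        exact ⟨g, hg, Finset.mem_inter.mpr ⟨hx, hxg⟩⟩
      have hle : Jc.card ≤ k * d := by
        calc Jc.card = (Jc.image (fun j => u j i)).card := hPcard.symm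
          _ ≤ (F.biUnion (fun g => (Jc.image (fun j => u j i)) ∩ g)).card :=
              Finset.card_le_card hcover
          _ ≤ ∑ g ∈ F, ((Jc.image (fun j => u j i)) ∩ g).card := Finset.card_biUnion_le
          _ ≤ ∑ _g ∈ F, d := Finset.sum_le_sum hPsub
          _ = F.card * d := by rw [Finset.sum_const, smul_eq_mul]
          _ ≤ k * d := Nat.mul_le_mul_right d hFcard
      have h3 : 2*(k*d) ≤ (3*k+1)*d := by
        have h4 : 2*k ≤ 3*k+1 := by omega
        calc 2*(k*d) = (2*k)*d := by ring
          _ ≤ (3*k+1)*d := Nat.mul_le_mul_right d h4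
      have h5 : (3*k+1)*d + 1 ≤ (3*k+1)*d :=
        le_trans hJc (le_trans (Nat.mul_le_mul_left 2 hle) h3)
      exact Nat.not_succ_le_self ((3*k+1)*d) h5
    have hinj2 : Set.InjOn e Rows := by
      intro i hi i' hi' heq
      by_contra hne
      exact heinj i i' hne heq
    have hcR := Finset.card_le_card_of_injOn e hstep hinj2
    omega
  -- apply the counting argument to the larger column class
  set J1 := Finset.univ.filter
    (fun j : Fin ((3*k+1)*d+1) => ∀ i ∈ Finset.univ \ I2, u j i ∈ B t) with hJ1
  set J2 := Finset.univ.filter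
    (fun j : Fin ((3*k+1)*d+1) => ∀ i ∈ Finset.univ \ I1, u j i ∈ B t) with hJ2
  have hJsum : (3*k+1)*d+1 ≤ J1.card + J2.card := by
    have hsub : (Finset.univ : Finset (Fin ((3*k+1)*d+1))) ⊆ J1 ∪ J2 := by
      intro j _
      rcases hcol j with h | h
      · exact Finset.mem_union_left _
          (by rw [hJ1, Finset.mem_filter]; exact ⟨Finset.mem_univ _, h⟩)
      · exact Finset.mem_union_right _
          (by rw [hJ2, Finset.mem_filter]; exact ⟨Finset.mem_univ _, h⟩)
    calc (3*k+1)*d+1 = (Finset.univ : Finset (Fin ((3*k+1)*d+1))).card := by simp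
      _ ≤ (J1 ∪ J2).card := Finset.card_le_card hsub
      _ ≤ J1.card + J2.card := Finset.card_union_le _ _
  rcases le_total J1.card J2.card with hc | hc
  · refine final (Finset.univ \ I1) J2 hrows2card (by omega) ?_
    intro i hi j hj
    rw [hJ2, Finset.mem_filter] at hj
    exact hj.2 i hi
  · refine final (Finset.univ \ I2) J1 hrows1card (by omega) ?_
    intro i hi j hj
    rw [hJ1, Finset.mem_filter] at hj
    exact hj.2 i hi
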